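/- Fix an integer p ≥ 3, a constant C > 0, β > 0 and h ∈ ℝ, and define ξ₀(r) = r²/2 + (C r)^p/p and F_RS(q,β,h) = E[log cosh(β·√(ξ₀'(q))·Z + h)] + (β²/2)·(ξ₀(1) − ξ₀(q) − (1−q)·ξ₀'(q)) for q ∈ [0,1], where Z is a standard Gaussian random variable. Then q ↦ F_RS(q,β,h) is differentiable on (0,1), and for every q ∈ (0,1) its derivative equals (β²·ξ₀''(q)/2)·( q − E[tanh²(β·√(ξ₀'(q))·Z + h)] ). -/

import Mathlib

/-! Differentiating under the Gaussian integral in the coupling `a = β √(ξ'(q))` gives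
`E[Z tanh(aZ + h)]`, which Gaussian integration by parts turns into `a (1 - E[tanh²(aZ + h)])`.
The chain rule multiplies this by `da/dq = β ξ''(q) / (2 √(ξ'(q)))`, producing
`β² ξ''(q) (1 - E[tanh²]) / 2`; the energy term contributes `-β² ξ''(q) (1 - q) / 2`. -/

open Real MeasureTheory ProbabilityTheory

namespace Real

theorem hasDerivAt_tanh (y : ℝ) : HasDerivAt tanh (1 - tanh y ^ 2) y := by
  rw [show tanh = fun y => sinh y / cosh y from funext tanh_eq_sinh_div_cosh]
  refine ((hasDerivAt_sinh y).div (hasDerivAt_cosh y) (cosh_pos y).ne').congr_deriv ?_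
  field_simp

theorem hasDerivAt_log_cosh (y : ℝ) : HasDerivAt (fun y => log (cosh y)) (tanh y) y := by
  simpa [tanh_eq_sinh_div_cosh] using (hasDerivAt_cosh y).log (cosh_pos y).ne'

theorem abs_one_sub_tanh_sq_le_one (y : ℝ) : |1 - tanh y ^ 2| ≤ 1 := by
  have := abs_tanh_lt_one y
  rw [abs_le]; constructor <;> nlinarith [sq_abs (tanh y), abs_nonneg (tanh y)]

end Real

theorem hasDerivAt_integral_comp_mul_add {μ : Measure ℝ} [IsFiniteMeasure μ]
    (hμ : Integrable id μ) {g : ℝ → ℝ} (hg : Differentiable ℝ g) {K : ℝ}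
    (hK : ∀ y, |deriv g y| ≤ K) (h a₀ : ℝ) :
    HasDerivAt (fun a => ∫ x, g (a * x + h) ∂μ) (∫ x, x * deriv g (a₀ * x + h) ∂μ) a₀ := by
  have hK₀ : 0 ≤ K := (abs_nonneg _).trans (hK 0)
  have hLip : LipschitzWith K.toNNReal g :=
    lipschitzWith_of_nnnorm_deriv_le hg fun y => by
      rw [← NNReal.coe_le_coe, coe_nnnorm, Real.coe_toNNReal _ hK₀]; exact hK y
  have hmeas : ∀ a : ℝ, AEStronglyMeasurable (fun x => g (a * x + h)) μ := fun a =>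
    (hg.continuous.comp (by fun_prop)).aestronglyMeasurable
  have hint : Integrable (fun x => g (a₀ * x + h)) μ := by
    refine ((integrable_const |g h|).add (hμ.norm.const_mul (K * |a₀|))).mono' (hmeas a₀)
      (ae_of_all _ fun x => ?_)
    have hdist := hLip.dist_le_mul (a₀ * x + h) h
    rw [Real.coe_toNNReal _ hK₀, dist_eq_norm, dist_eq_norm, add_sub_cancel_right,
      norm_mul] at hdist
    have := norm_le_insert' (g (a₀ * x + h)) (g h)
    simp only [Pi.add_apply, id, norm_eq_abs] at hdist this ⊢
    linarith
  have hderiv : ∀ x a, HasDerivAt (fun a => g (a * x + h)) (x * deriv g (a * x + h)) a :=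
    fun x a => by
      simpa [Function.comp_def, mul_comm] using
        (hg _).hasDerivAt.comp a ((hasDerivAt_mul_const x).add_const h)
  refine (hasDerivAt_integral_of_dominated_loc_of_deriv_le (bound := fun x => K * |x|)
    (F := fun a x => g (a * x + h)) (F' := fun a x => x * deriv g (a * x + h))
    Filter.univ_mem (.of_forall hmeas) hint
    ((measurable_id.mul ((measurable_deriv g).comp (by fun_prop))).aestronglyMeasurable)
    (ae_of_all _ fun x a _ => ?_) (hμ.norm.const_mul K) (ae_of_all _ fun x a _ => hderiv x a)).2
  rw [norm_mul, norm_eq_abs, norm_eq_abs, mul_comm]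
  exact mul_le_mul_of_nonneg_right (hK _) (abs_nonneg x)

namespace ProbabilityTheory

variable {μ : ℝ} {v : NNReal}

theorem hasDerivAt_gaussianPDFReal (x : ℝ) :
    HasDerivAt (gaussianPDFReal μ v) (-(x - μ) / v * gaussianPDFReal μ v x) x := by
  -- for `v = 0` both sides vanish through `x / 0 = 0`
  have hexp := ((((hasDerivAt_id x).sub_const μ).pow 2).neg.div_const (2 * (v : ℝ))).exp
  refine HasDerivAt.congr_deriv (f := gaussianPDFReal μ v) (hexp.const_mul (√(2 * π * v))⁻¹) ?_
  simp only [gaussianPDFReal, id, Pi.neg_apply, Pi.pow_apply]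
  rcases eq_or_ne (v : ℝ) 0 with hv | hv
  · simp [hv]
  · field_simp
    ring

theorem integrable_gaussianReal_iff (hv : v ≠ 0) {f : ℝ → ℝ} :
    Integrable f (gaussianReal μ v) ↔ Integrable (fun x => gaussianPDFReal μ v x * f x) := by
  rw [gaussianReal_of_var_ne_zero μ hv, integrable_withDensity_iff_integrable_smul'
    (measurable_gaussianPDF μ v) (ae_of_all _ fun _ => gaussianPDF_lt_top)]
  simp only [toReal_gaussianPDF, smul_eq_mul]

theorem integral_sub_mul_gaussianReal_eq_integral_deriv {u : ℝ → ℝ} (hu : Differentiable ℝ u)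
    {M K : ℝ} (hM : ∀ x, |u x| ≤ M) (hK : ∀ x, |deriv u x| ≤ K) :
    ∫ x, (x - μ) * u x ∂gaussianReal μ v = v * ∫ x, deriv u x ∂gaussianReal μ v := by
  rcases eq_or_ne v 0 with rfl | hv
  · simp
  set φ := gaussianPDFReal μ v
  have hint_id : Integrable (fun x => x - μ) (gaussianReal μ v) :=
    ((memLp_id_gaussianReal 1).integrable le_rfl).sub (integrable_const μ)
  have hint_mul : Integrable (fun x => φ x * ((x - μ) * u x)) := by
    rw [← integrable_gaussianReal_iff hv]
    simpa [mul_comm] using hint_id.bdd_mul hu.continuous.aestronglyMeasurable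
      (ae_of_all _ fun x => (hM x : ‖u x‖ ≤ M))
  have hint_deriv : Integrable (fun x => φ x * deriv u x) := by
    rw [← integrable_gaussianReal_iff hv]
    exact (integrable_const K).mono' (measurable_deriv u).aestronglyMeasurable
      (ae_of_all _ fun x => hK x)
  have hint_u : Integrable (fun x => φ x * u x) := by
    rw [← integrable_gaussianReal_iff hv]
    exact (integrable_const M).mono' hu.continuous.aestronglyMeasurable (ae_of_all _ fun x => hM x)
  have hibp := integral_mul_deriv_eq_deriv_mul_of_integrable (u := u) (v := φ)
    (fun x _ => (hu x).hasDerivAt) (fun x _ => hasDerivAt_gaussianPDFReal x)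
    ((hint_mul.const_mul (-(v : ℝ)⁻¹)).congr
      (ae_of_all _ fun x => by simp only [Pi.mul_apply]; ring))
    (hint_deriv.congr (ae_of_all _ fun x => by simp only [Pi.mul_apply]; ring))
    (hint_u.congr (ae_of_all _ fun x => by simp only [Pi.mul_apply]; ring))
  have hv₀ : (v : ℝ) ≠ 0 := NNReal.coe_ne_zero.mpr hv
  simp only [integral_gaussianReal_eq_integral_smul hv, smul_eq_mul]
  calc ∫ x, φ x * ((x - μ) * u x)
      = -v * ∫ x, u x * (-(x - μ) / v * φ x) := by
        rw [← integral_const_mul]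
        congr with x
        field_simp
    _ = v * ∫ x, φ x * deriv u x := by
        rw [hibp, neg_mul_neg]
        simp only [φ, mul_comm (deriv u _)]

end ProbabilityTheory

theorem hasDerivAt_integral_log_cosh_gaussianReal (h a : ℝ) :
    HasDerivAt (fun b => ∫ x, log (cosh (b * x + h)) ∂gaussianReal 0 1)
      (a * (1 - ∫ x, tanh (a * x + h) ^ 2 ∂gaussianReal 0 1)) a := by
  have hlc : deriv (fun y => log (cosh y)) = tanh := funext fun y => (hasDerivAt_log_cosh y).deriv
  have hdiff := hasDerivAt_integral_comp_mul_add
    ((memLp_id_gaussianReal (μ := 0) (v := 1) 1).integrable le_rfl)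
    (fun y => (hasDerivAt_log_cosh y).differentiableAt) (K := 1)
    (fun y => by rw [hlc]; exact (abs_tanh_lt_one y).le) h a
  have hu : ∀ x, HasDerivAt (fun x => tanh (a * x + h)) ((1 - tanh (a * x + h) ^ 2) * a) x :=
    fun x => (hasDerivAt_tanh _).comp x
      (((hasDerivAt_id x).const_mul a).add_const h |>.congr_deriv (mul_one a))
  have hstein := integral_sub_mul_gaussianReal_eq_integral_deriv (μ := 0) (v := 1)
    (fun x => (hu x).differentiableAt) (M := 1) (K := |a|)
    (fun x => (abs_tanh_lt_one _).le)
    (fun x => by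
      rw [(hu x).deriv, abs_mul]
      exact mul_le_of_le_one_left (abs_nonneg a) (abs_one_sub_tanh_sq_le_one _))
  simp only [hlc] at hdiff
  refine hdiff.congr_deriv ?_
  simp only [sub_zero, NNReal.coe_one, one_mul, fun x => (hu x).deriv] at hstein
  rw [hstein, integral_mul_const, integral_sub (integrable_const 1), integral_const]
  · simp [mul_comm]
  · have hcont : Continuous fun x => tanh (a * x + h) :=
      continuous_iff_continuousAt.2 fun x => (hu x).continuousAt
    refine (integrable_const 1).mono' (hcont.pow 2).aestronglyMeasurable (ae_of_all _ fun x => ?_)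
    rw [norm_pow, norm_eq_abs]
    exact pow_le_one₀ (abs_nonneg _) (abs_tanh_lt_one _).le

noncomputable def replicaSymmetricFunctional (ξ : ℝ → ℝ) (β h q : ℝ) : ℝ :=
  (∫ x, log (cosh (β * √(deriv ξ q) * x + h)) ∂gaussianReal 0 1)
    + β ^ 2 / 2 * (ξ 1 - ξ q - (1 - q) * deriv ξ q)

theorem hasDerivAt_replicaSymmetricFunctional {ξ : ℝ → ℝ} (hξ : ContDiff ℝ 2 ξ) (β h : ℝ)
    {q : ℝ} (hq : 0 < deriv ξ q) :
    HasDerivAt (replicaSymmetricFunctional ξ β h)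
      (β ^ 2 * deriv (deriv ξ) q / 2 *
        (q - ∫ x, tanh (β * √(deriv ξ q) * x + h) ^ 2 ∂gaussianReal 0 1)) q := by
  have hξ₁ : HasDerivAt ξ (deriv ξ q) q := (hξ.differentiable two_ne_zero q).hasDerivAt
  have hξ₂ : HasDerivAt (deriv ξ) (deriv (deriv ξ) q) q :=
    (hξ.differentiable_deriv_two q).hasDerivAt
  have hcoupling : HasDerivAt (fun q => β * √(deriv ξ q))
      (β * (deriv (deriv ξ) q / (2 * √(deriv ξ q)))) q :=
    (hξ₂.sqrt hq.ne').const_mul β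
  have hgauss := (hasDerivAt_integral_log_cosh_gaussianReal h _).comp q hcoupling
  have henergy := (((hasDerivAt_const q (ξ 1)).sub hξ₁).sub
    (((hasDerivAt_const q 1).sub (hasDerivAt_id q)).mul hξ₂)).const_mul (β ^ 2 / 2)
  refine (hgauss.add henergy).congr_deriv ?_
  have hsqrt : √(deriv ξ q) ≠ 0 := (sqrt_pos.2 hq).ne'
  simp only [Pi.sub_apply, id]
  field_simp
  ring

theorem hasDerivAt_sq_div_two_add_mul_pow_div {p : ℕ} (hp : p ≠ 0) (C r : ℝ) :
    HasDerivAt (fun r : ℝ => r ^ 2 / 2 + (C * r) ^ p / p) (r + C * (C * r) ^ (p - 1)) r := by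
  have hsq := (hasDerivAt_pow 2 r).div_const 2
  have hpow := ((hasDerivAt_pow p (C * r)).comp r ((hasDerivAt_id r).const_mul C)).div_const p
  refine (hsq.add hpow).congr_deriv ?_
  field_simp
  push_cast
  ring

theorem stmt_9_general (p : ℕ) (hp : 3 ≤ p) (C β h : ℝ) (hC : 0 < C) :
    let ξ₀ : ℝ → ℝ := fun r => r ^ 2 / 2 + (C * r) ^ p / p
    let F : ℝ → ℝ := fun q =>
      (∫ x, Real.log (Real.cosh (β * Real.sqrt (deriv ξ₀ q) * x + h)) ∂(gaussianReal 0 1))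
        + β ^ 2 / 2 * (ξ₀ 1 - ξ₀ q - (1 - q) * deriv ξ₀ q)
    ∀ q ∈ Set.Ioo (0 : ℝ) 1,
      HasDerivAt F
        (β ^ 2 * deriv (deriv ξ₀) q / 2 *
          (q - ∫ x, Real.tanh (β * Real.sqrt (deriv ξ₀ q) * x + h) ^ 2 ∂(gaussianReal 0 1)))
        q := by
  intro ξ₀ F q hq
  have hξ₀ : ContDiff ℝ 2 ξ₀ := by fun_prop
  have hpos : 0 < deriv ξ₀ q := by
    rw [(hasDerivAt_sq_div_two_add_mul_pow_div (by omega) C q).deriv]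
    have := hq.1
    positivity
  exact hasDerivAt_replicaSymmetricFunctional hξ₀ β h hpos

/-- For `p ≥ 3`, `C > 0`, `β > 0`, `h ∈ ℝ`, `ξ₀ r = r²/2 + (C r)^p/p` and the RS functional
`F_RS(q) = E[log cosh(β √(ξ₀'(q)) Z + h)] + (β²/2)(ξ₀(1) - ξ₀(q) - (1-q) ξ₀'(q))`,
the map `q ↦ F_RS(q)` is differentiable on `(0,1)` with derivative
`(β² ξ₀''(q)/2) (q - E[tanh²(β √(ξ₀'(q)) Z + h)])` at every `q ∈ (0,1)`. -/
theorem stmt_9 (p : ℕ) (hp : 3 ≤ p) (C β h : ℝ) (hC : 0 < C) (hβ : 0 < β) :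
    let ξ₀ : ℝ → ℝ := fun r => r ^ 2 / 2 + (C * r) ^ p / p
    let F : ℝ → ℝ := fun q =>
      (∫ x, Real.log (Real.cosh (β * Real.sqrt (deriv ξ₀ q) * x + h)) ∂(gaussianReal 0 1))
        + β ^ 2 / 2 * (ξ₀ 1 - ξ₀ q - (1 - q) * deriv ξ₀ q)
    ∀ q ∈ Set.Ioo (0 : ℝ) 1,
      HasDerivAt F
        (β ^ 2 * deriv (deriv ξ₀) q / 2 *
          (q - ∫ x, Real.tanh (β * Real.sqrt (deriv ξ₀ q) * x + h) ^ 2 ∂(gaussianReal 0 1)))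
        q :=
  stmt_9_general p hp C β h hC
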